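/- arXiv:2004.12740 — 2 statements merged into one kernel-verified Lean document; each statement's English description precedes it below -/
import Mathlib

section
/- In a chart with a LLEE-witness, two vertices u and v are in the same strongly connected component if and only if there exists a vertex w such that u ⇢* w and v ⇢* w, where ⇢ is the loops-back-to relation. -/
/-- An entry/body-labeled finite chart: a rooted labelled transition system with
termination sink `tick` (√), start vertex `start`, and transitions carrying an
action from `A` together with a marking label in ℕ (label `0` marks body
transitions, positive labels mark entry transitions).  Every vertex other than
possibly `tick` is reachable from the start vertex. -/
structure LChart (V : Type) (A : Type) : Type where
  tick : V
  start : V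
  Tr : V → A → ℕ → V → Prop
  tick_no_out : ∀ (a : A) (n : ℕ) (w : V), ¬ Tr tick a n w
  start_ne_tick : start ≠ tick
  connected : ∀ v : V, v = tick ∨
    Relation.ReflTransGen (fun x y => ∃ (a : A) (n : ℕ), Tr x a n y) start v

namespace LChart

variable {V A : Type}

/-- Body transition step (marking label `0`). -/
def BStep (C : LChart V A) (x y : V) : Prop := ∃ a : A, C.Tr x a 0 y

/-- Entry transition step of level `α > 0`. -/
def EStep (C : LChart V A) (α : ℕ) (x y : V) : Prop := 0 < α ∧ ∃ a : A, C.Tr x a α y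

/-- A transition step of any kind. -/
def AnyStep (C : LChart V A) (x y : V) : Prop := ∃ (a : A) (n : ℕ), C.Tr x a n y

/-- There is an entry transition of level `α` departing from `v`. -/
def HasEntry (C : LChart V A) (v : V) (α : ℕ) : Prop :=
  0 < α ∧ ∃ (a : A) (w : V), C.Tr v a α w

/-- `v` descends in a loop of level `α` to `w`: there is a path from `v` to `w`
starting with an `α`-entry transition and continuing with body transitions, in
which all transition targets avoid `v`. -/
def Descends (C : LChart V A) (v : V) (α : ℕ) (w : V) : Prop :=
  ∃ u : V, C.EStep α v u ∧ u ≠ v ∧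
    Relation.ReflTransGen (fun x y => C.BStep x y ∧ y ≠ v) u w

/-- `v` descends in a loop to `w` (at some level). -/
def Desc (C : LChart V A) (v w : V) : Prop := ∃ α : ℕ, C.Descends v α w

/-- An infinite path from `v` in the loop subchart `C[v,α]`: it starts at `v`,
takes an `α`-entry transition whenever it is at `v`, and body transitions
otherwise. -/
def LoopSeq (C : LChart V A) (v : V) (α : ℕ) (f : ℕ → V) : Prop :=
  f 0 = v ∧ ∀ n : ℕ,
    (f n = v → C.EStep α (f n) (f (n + 1))) ∧ (f n ≠ v → C.BStep (f n) (f (n + 1)))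

/-- The conditions (W1), (W2)(a) (the subchart `C[v,α]` is a loop chart, i.e.
(L1) an infinite path from `v` exists, (L2) every infinite path from `v`
returns to `v` after a positive number of steps, (L3) √ is not a vertex of
`C[v,α]`), and (W2)(b) (layeredness) for an entry/body-labeling to be a
LLEE-witness. -/
structure IsLLEE (C : LChart V A) : Prop where
  w1 : ¬ ∃ f : ℕ → V, f 0 = C.start ∧ ∀ n : ℕ, C.BStep (f n) (f (n + 1))
  w2a_L1 : ∀ (v : V) (α : ℕ), C.HasEntry v α → ∃ f : ℕ → V, C.LoopSeq v α f
  w2a_L2 : ∀ (v : V) (α : ℕ), C.HasEntry v α →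
    ∀ f : ℕ → V, C.LoopSeq v α f → ∃ n : ℕ, 0 < n ∧ f n = v
  w2a_L3 : ∀ (v : V) (α : ℕ), ¬ C.Descends v α C.tick
  w2b : ∀ (v w : V) (α : ℕ), C.Descends v α w → ∀ β : ℕ, α ≤ β → ¬ C.HasEntry w β

/-- `u` and `v` lie in the same strongly connected component. -/
def SameSCC (C : LChart V A) (u v : V) : Prop :=
  Relation.ReflTransGen C.AnyStep u v ∧ Relation.ReflTransGen C.AnyStep v u

/-- `w` loops back to `v`: `v` descends in a loop to `w` and there is a nonempty
path of body transitions from `w` back to `v`. -/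
def LoopsBack (C : LChart V A) (w v : V) : Prop :=
  C.Desc v w ∧ Relation.TransGen C.BStep w v

/-- `w` directly loops back to `v`. -/
def DLoopsBack (C : LChart V A) (w v : V) : Prop :=
  C.LoopsBack w v ∧ ∀ u : V, C.LoopsBack w u → u = v ∨ C.LoopsBack v u

end LChart

/-!
An LLEE-chart has no infinite body paths, so every cycle contains an entry transition. Take an entry
of maximal level `α` on a cycle through `u` and `v`, departing from `w`. By layeredness, every
vertex reachable from the loop of a vertex `y` at level `ε` without passing `y` has only entries
of level `< ε`. Hence a body transition out of `w` can never lead back to `w` along transitions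
of level `≤ α`, so the cycle leaves `w` only through loop entries, and every vertex `z` of the
cycle is reachable inside a loop of `w`. Descending through the loops nested between `w` and `z`,
each of which `z` can only leave through its loop vertex, gives `z ⇢* w`.
-/

namespace Relation

variable {α : Type*} {r s : α → α → Prop} {a b c : α}

theorem ReflTransGen.transGen_avoiding_source (h : ReflTransGen r a b) (hba : b ≠ a) :
    TransGen (fun x y => r x y ∧ y ≠ a) a b := by
  induction h with
  | refl => exact absurd rfl hba
  | @tail c d _ hcd ih =>
    by_cases hca : c = a
    · exact .single ⟨hca ▸ hcd, hba⟩
    · exact .tail (ih hca) ⟨hcd, hba⟩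

theorem ReflTransGen.avoiding_or_reflTransGen (h : ReflTransGen r a c) (b : α) :
    ReflTransGen (fun x y => r x y ∧ y ≠ b) a c ∨ ReflTransGen r a b := by
  induction h with
  | refl => exact .inl .refl
  | @tail d e had hde ih =>
    rcases ih with ih | ih
    · by_cases heb : e = b
      · exact .inr (heb ▸ had.tail hde)
      · exact .inl (ih.tail ⟨hde, heb⟩)
    · exact .inr ih

theorem ReflTransGen.reflTransGen_or_exists_not (h : ReflTransGen s a b) :
    ReflTransGen r a b ∨
      ∃ c d, s c d ∧ ¬ r c d ∧ ReflTransGen s a c ∧ ReflTransGen s d b := by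
  induction h with
  | refl => exact .inl .refl
  | @tail c d hac hcd ih =>
    rcases ih with ih | ⟨c', d', hs, hr, hac', hdc⟩
    · by_cases hr : r c d
      · exact .inl (ih.tail hr)
      · exact .inr ⟨c, d, hcd, hr, hac, .refl⟩
    · exact .inr ⟨c', d', hs, hr, hac', hdc.tail hcd⟩

end Relation

namespace LChart

open Relation

variable {V A : Type} {C : LChart V A} {u v w x y z : V} {α β : ℕ}

def StepLE (C : LChart V A) (α : ℕ) (x y : V) : Prop :=
  ∃ (a : A) (n : ℕ), n ≤ α ∧ C.Tr x a n y

def LoopReaches (C : LChart V A) (v : V) (α : ℕ) (z : V) : Prop :=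
  ∃ u : V, C.EStep α v u ∧ u ≠ v ∧ ReflTransGen (fun x y => C.AnyStep x y ∧ y ≠ v) u z

theorem BStep.anyStep (h : C.BStep x y) : C.AnyStep x y :=
  let ⟨a, h⟩ := h; ⟨a, 0, h⟩

theorem EStep.anyStep (h : C.EStep α x y) : C.AnyStep x y :=
  let ⟨_, a, h⟩ := h; ⟨a, α, h⟩

theorem EStep.hasEntry (h : C.EStep α x y) : C.HasEntry x α :=
  let ⟨hα, a, h⟩ := h; ⟨hα, a, y, h⟩

theorem EStep.descends (h : C.EStep α x y) (hyx : y ≠ x) : C.Descends x α y :=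
  ⟨y, h, hyx, .refl⟩

theorem AnyStep.cases (h : C.AnyStep x y) : C.BStep x y ∨ ∃ β, C.EStep β x y := by
  obtain ⟨a, n, h⟩ := h
  rcases n.eq_zero_or_pos with rfl | hn
  · exact .inl ⟨a, h⟩
  · exact .inr ⟨n, hn, a, h⟩

theorem StepLE.anyStep (h : C.StepLE α x y) : C.AnyStep x y :=
  let ⟨a, n, _, h⟩ := h; ⟨a, n, h⟩

theorem StepLE.mono (hαβ : α ≤ β) (h : C.StepLE α x y) : C.StepLE β x y :=
  let ⟨a, n, hn, h⟩ := h; ⟨a, n, hn.trans hαβ, h⟩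

theorem StepLE.cases (h : C.StepLE α x y) : C.BStep x y ∨ ∃ β ≤ α, C.EStep β x y := by
  obtain ⟨a, n, hn, h⟩ := h
  rcases n.eq_zero_or_pos with rfl | hn'
  · exact .inl ⟨a, h⟩
  · exact .inr ⟨n, hn, hn', a, h⟩

theorem StepLE.bStep_of_zero (h : C.StepLE 0 x y) : C.BStep x y := by
  obtain ⟨a, n, hn, h⟩ := h
  exact ⟨a, Nat.le_zero.mp hn ▸ h⟩

theorem StepLE.hasEntry_of_not_stepLE (h : C.StepLE (α + 1) x y) (h' : ¬ C.StepLE α x y) :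
    C.HasEntry x (α + 1) := by
  obtain ⟨a, n, hn, h⟩ := h
  obtain rfl : n = α + 1 := by
    by_contra hne
    exact h' ⟨a, n, by omega, h⟩
  exact ⟨α.succ_pos, a, y, h⟩

theorem exists_reflTransGen_stepLE (h : ReflTransGen C.AnyStep x y) :
    ∃ α, ReflTransGen (C.StepLE α) x y := by
  induction h with
  | refl => exact ⟨0, .refl⟩
  | tail _ hst ih =>
    obtain ⟨α, hα⟩ := ih
    obtain ⟨a, n, h⟩ := hst
    exact ⟨max α n, (ReflTransGen.mono (fun _ _ => StepLE.mono (le_max_left α n)) _ _ hα).tail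
      ⟨a, n, le_max_right α n, h⟩⟩

theorem Descends.hasEntry (h : C.Descends v α z) : C.HasEntry v α :=
  let ⟨_, he, _⟩ := h; he.hasEntry

theorem Descends.ne (h : C.Descends v α z) : z ≠ v := by
  obtain ⟨u, -, hu, hp⟩ := h
  induction hp with
  | refl => exact hu
  | tail _ hst _ => exact hst.2

theorem Descends.tail (h : C.Descends v α z) (hb : C.BStep z y) (hyv : y ≠ v) :
    C.Descends v α y :=
  let ⟨u, he, hu, hp⟩ := h; ⟨u, he, hu, hp.tail ⟨hb, hyv⟩⟩

theorem Descends.reflTransGen_anyStep (h : C.Descends v α z) : ReflTransGen C.AnyStep v z :=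
  let ⟨_, he, _, hp⟩ := h
  .head he.anyStep (ReflTransGen.mono (fun _ _ h => h.1.anyStep) _ _ hp)

theorem Descends.entry_lt (hC : C.IsLLEE) (h : C.Descends v α z) (he : C.HasEntry z β) :
    β < α :=
  Nat.lt_of_not_le fun hle => hC.w2b v z α h β hle he

theorem LoopReaches.reflTransGen_anyStep (h : C.LoopReaches v α z) :
    ReflTransGen C.AnyStep v z :=
  let ⟨_, he, _, hp⟩ := h
  .head he.anyStep (ReflTransGen.mono (fun _ _ h => h.1) _ _ hp)

theorem LoopReaches.trans (h : C.LoopReaches v α z)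
    (hzw : ReflTransGen (fun x y => C.AnyStep x y ∧ y ≠ v) z w) : C.LoopReaches v α w :=
  let ⟨u, he, hu, hp⟩ := h; ⟨u, he, hu, hp.trans hzw⟩

theorem not_exists_bStep_seq (hC : C.IsLLEE) (v : V) :
    ¬ ∃ f : ℕ → V, f 0 = v ∧ ∀ n, C.BStep (f n) (f (n + 1)) := by
  rcases C.connected v with rfl | hv
  · rintro ⟨f, hf0, hf⟩
    obtain ⟨a, ha⟩ := hf 0
    exact C.tick_no_out a 0 _ (hf0 ▸ ha)
  induction hv with
  | refl => exact hC.w1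
  | @tail p v _ hpv ih =>
    rintro ⟨f, rfl, hf⟩
    rcases AnyStep.cases (C := C) hpv with hb | ⟨δ, he⟩
    · exact ih ⟨fun n => n.casesOn p f, rfl, fun n => n.casesOn hb hf⟩
    by_cases hp : ∃ k, f k = p
    · obtain ⟨k, hk⟩ := hp
      exact ih ⟨fun n => f (k + n), hk, fun n => hf (k + n)⟩
    -- otherwise `p` followed by `f` runs forever in the loop subchart `C[p, δ]`, against (L2)
    push Not at hp
    obtain ⟨n, hn, hpn⟩ := hC.w2a_L2 p δ he.hasEntry (fun n => n.casesOn p f)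
      ⟨rfl, fun n => n.casesOn ⟨fun _ => he, (absurd rfl ·)⟩
        fun k => ⟨fun hk => absurd hk (hp k), fun _ => hf k⟩⟩
    obtain ⟨m, rfl⟩ := Nat.exists_eq_succ_of_ne_zero hn.ne'
    exact hp m hpn

theorem wellFounded_bStep (hC : C.IsLLEE) : WellFounded fun x y => C.BStep y x :=
  ⟨fun v => not_not.mp fun hv =>
    not_exists_bStep_seq hC v (not_acc_iff_exists_descending_chain.mp hv)⟩

theorem not_transGen_bStep_self (hC : C.IsLLEE) (z : V) : ¬ TransGen C.BStep z z :=
  fun h => (wellFounded_bStep hC).transGen.irrefl.irrefl z (transGen_swap.mpr h)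

theorem LoopReaches.induction (hC : C.IsLLEE) {P : V → ℕ → V → Prop}
    (descends : ∀ {v α z}, C.Descends v α z → P v α z)
    (nested : ∀ {v α y ε z}, C.Descends v α y → C.LoopReaches y ε z → ε < α →
      P y ε z → P v α z)
    (h : C.LoopReaches v α z) : P v α z := by
  induction α using Nat.strong_induction_on generalizing v z with
  | _ α ihα =>
  obtain ⟨u, he, hu, hp⟩ := h
  suffices ∀ y, C.Descends v α y →
      ReflTransGen (fun x y => C.AnyStep x y ∧ y ≠ v) y z → P v α z from
    this u (he.descends hu) hp
  intro y
  induction y using (wellFounded_bStep hC).induction with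
  | _ y ihy =>
  intro hy hyz
  by_cases hzy : z = y
  · exact hzy ▸ descends hy
  obtain ⟨y', ⟨⟨hyy', hy'v⟩, hy'y⟩, hy'z⟩ :=
    TransGen.head'_iff.mp (hyz.transGen_avoiding_source hzy)
  rcases AnyStep.cases hyy' with hb | ⟨ε, he⟩
  · exact ihy y' hb (hy.tail hb hy'v) (ReflTransGen.mono (fun _ _ h => h.1) _ _ hy'z)
  · have hεα := hy.entry_lt hC he.hasEntry
    have hz : C.LoopReaches y ε z :=
      ⟨y', he, hy'y, ReflTransGen.mono (fun _ _ h => ⟨h.1.1, h.2⟩) _ _ hy'z⟩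
    exact nested hy hz hεα (ihα ε hεα hz)

theorem LoopReaches.entry_lt (hC : C.IsLLEE) (h : C.LoopReaches v α z) (he : C.HasEntry z β) :
    β < α := by
  revert he
  refine LoopReaches.induction hC (P := fun _ α z => C.HasEntry z β → β < α)
    (fun hD he => hD.entry_lt hC he) (fun _ _ hεα ih he => (ih he).trans hεα) h

theorem Descends.transGen_bStep (hC : C.IsLLEE) (hD : C.Descends v α z)
    (hzv : ReflTransGen C.AnyStep z v) : TransGen C.BStep z v := by
  induction z using (wellFounded_bStep hC).induction with
  | _ z ih =>
  obtain ⟨y, ⟨hzy, hyz⟩, hyv⟩ :=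
    TransGen.head'_iff.mp (hzv.transGen_avoiding_source hD.ne.symm)
  rcases AnyStep.cases hzy with hb | ⟨δ, he⟩
  · by_cases hyv' : y = v
    · exact .single (hyv' ▸ hb)
    · exact .head hb (ih y hb (hD.tail hb hyv') (ReflTransGen.mono (fun _ _ h => h.1) _ _ hyv))
  · -- `v` would be reachable in the loop of `z` at level `δ < α`, yet has an entry of level `α`
    have hαδ := LoopReaches.entry_lt hC ⟨y, he, hyz, hyv⟩ hD.hasEntry
    exact absurd (hD.entry_lt hC he.hasEntry) (not_lt.mpr hαδ.le)

theorem Descends.loopsBack (hC : C.IsLLEE) (hD : C.Descends v α z)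
    (hzv : ReflTransGen C.AnyStep z v) : C.LoopsBack z v :=
  ⟨⟨α, hD⟩, hD.transGen_bStep hC hzv⟩

theorem LoopReaches.reflTransGen_loopsBack (hC : C.IsLLEE) (h : C.LoopReaches v α z)
    (hzv : ReflTransGen C.AnyStep z v) : ReflTransGen C.LoopsBack z v := by
  revert hzv
  refine LoopReaches.induction hC (P := fun v _ z => ReflTransGen C.AnyStep z v →
    ReflTransGen C.LoopsBack z v) (fun hD hzv => .single (hD.loopsBack hC hzv)) ?_ h
  intro v α y ε z hy hz hεα ih hzv
  -- a path from `z` to `v` avoiding `y` would put `v`, which has an entry of level `α > ε`,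
  -- into the loop of `y`
  have hzy : ReflTransGen C.AnyStep z y := (hzv.avoiding_or_reflTransGen y).resolve_left
    fun hzv' => absurd ((hz.trans hzv').entry_lt hC hy.hasEntry) (not_lt.mpr hεα.le)
  exact (ih hzy).tail (hy.loopsBack hC (hz.reflTransGen_anyStep.trans hzv))

theorem HasEntry.not_return_of_transGen_bStep (hC : C.IsLLEE) (hw : C.HasEntry w α)
    (hwd : TransGen C.BStep w x) (hxw : ReflTransGen (C.StepLE α) x w) : False := by
  induction x using (wellFounded_bStep hC).induction with
  | _ x ih =>
  by_cases hwx : w = x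
  · exact not_transGen_bStep_self hC w (hwx ▸ hwd)
  obtain ⟨y, ⟨hxy, hyx⟩, hyw⟩ := TransGen.head'_iff.mp (hxw.transGen_avoiding_source hwx)
  rcases StepLE.cases hxy with hb | ⟨ε, hεα, he⟩
  · exact ih y hb (hwd.tail hb) (ReflTransGen.mono (fun _ _ h => h.1) _ _ hyw)
  · have hw' : C.LoopReaches x ε w :=
      ⟨y, he, hyx, ReflTransGen.mono (fun _ _ h => ⟨h.1.anyStep, h.2⟩) _ _ hyw⟩
    exact absurd (hw'.entry_lt hC hw) (not_lt.mpr hεα)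

theorem HasEntry.reflTransGen_loopsBack (hC : C.IsLLEE) (hw : C.HasEntry w α)
    (hwz : ReflTransGen (C.StepLE α) w z) (hzw : ReflTransGen (C.StepLE α) z w) :
    ReflTransGen C.LoopsBack z w := by
  by_cases hzw' : z = w
  · exact hzw' ▸ .refl
  obtain ⟨x, ⟨hwx, hxw⟩, hxz⟩ := TransGen.head'_iff.mp (hwz.transGen_avoiding_source hzw')
  rcases StepLE.cases hwx with hb | ⟨β, -, he⟩
  · exact (hw.not_return_of_transGen_bStep hC (.single hb)
      ((ReflTransGen.mono (fun _ _ h => h.1) _ _ hxz).trans hzw)).elim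
  · exact LoopReaches.reflTransGen_loopsBack hC
      ⟨x, he, hxw, ReflTransGen.mono (fun _ _ h => ⟨h.1.anyStep, h.2⟩) _ _ hxz⟩
      (ReflTransGen.mono (fun _ _ h => h.anyStep) _ _ hzw)

theorem HasEntry.reflTransGen_loopsBack_of_cycle (hC : C.IsLLEE) (hw : C.HasEntry w α)
    (huw : ReflTransGen (C.StepLE α) u w) (hwv : ReflTransGen (C.StepLE α) w v)
    (hvu : ReflTransGen (C.StepLE α) v u) :
    ReflTransGen C.LoopsBack u w ∧ ReflTransGen C.LoopsBack v w :=
  ⟨hw.reflTransGen_loopsBack hC (hwv.trans hvu) huw,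
    hw.reflTransGen_loopsBack hC hwv (hvu.trans huw)⟩

theorem exists_common_loopsBack_of_stepLE (hC : C.IsLLEE) :
    ∀ α {u v : V}, ReflTransGen (C.StepLE α) u v → ReflTransGen (C.StepLE α) v u →
      ∃ w, ReflTransGen C.LoopsBack u w ∧ ReflTransGen C.LoopsBack v w
  | 0, u, v, huv, hvu => by
    obtain rfl : v = u := (reflTransGen_iff_eq_or_transGen.mp huv).resolve_right fun huv' =>
      not_transGen_bStep_self hC u
        (TransGen.mono (fun _ _ => StepLE.bStep_of_zero) _ _ (huv'.trans_left hvu))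
    exact ⟨v, .refl, .refl⟩
  | k + 1, u, v, huv, hvu => by
    rcases huv.reflTransGen_or_exists_not (r := C.StepLE k) with
      huv' | ⟨w, x, hwx, hwx', huw, hxv⟩
    · rcases hvu.reflTransGen_or_exists_not (r := C.StepLE k) with
        hvu' | ⟨w, x, hwx, hwx', hvw, hxu⟩
      · exact exists_common_loopsBack_of_stepLE hC k huv' hvu'
      · have := (hwx.hasEntry_of_not_stepLE hwx').reflTransGen_loopsBack_of_cycle hC hvw
          (.head hwx hxu) huv
        exact ⟨w, this.2, this.1⟩
    · exact ⟨w, (hwx.hasEntry_of_not_stepLE hwx').reflTransGen_loopsBack_of_cycle hC huw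
        (.head hwx hxv) hvu⟩

theorem SameSCC.symm (h : C.SameSCC u v) : C.SameSCC v u := ⟨h.2, h.1⟩

theorem SameSCC.trans (huv : C.SameSCC u v) (hvw : C.SameSCC v w) : C.SameSCC u w :=
  ⟨huv.1.trans hvw.1, hvw.2.trans huv.2⟩

theorem LoopsBack.sameSCC (h : C.LoopsBack z v) : C.SameSCC z v :=
  let ⟨⟨_, hD⟩, hzv⟩ := h
  ⟨ReflTransGen.mono (fun _ _ h => h.anyStep) _ _ hzv.to_reflTransGen, hD.reflTransGen_anyStep⟩

theorem sameSCC_of_reflTransGen_loopsBack (h : ReflTransGen C.LoopsBack u v) : C.SameSCC u v := by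
  induction h with
  | refl => exact ⟨.refl, .refl⟩
  | tail _ hst ih => exact ih.trans hst.sameSCC

end LChart

theorem sameSCC_iff_common_loopsBack_general {V A : Type} (C : LChart V A)
    (h : C.IsLLEE) (u v : V) :
    C.SameSCC u v ↔ ∃ w : V, Relation.ReflTransGen C.LoopsBack u w ∧
      Relation.ReflTransGen C.LoopsBack v w := by
  constructor
  · rintro ⟨huv, hvu⟩
    obtain ⟨α, huv⟩ := LChart.exists_reflTransGen_stepLE huv
    obtain ⟨β, hvu⟩ := LChart.exists_reflTransGen_stepLE hvu
    exact LChart.exists_common_loopsBack_of_stepLE h (max α β)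
      (Relation.ReflTransGen.mono (fun _ _ => LChart.StepLE.mono (le_max_left α β)) _ _ huv)
      (Relation.ReflTransGen.mono (fun _ _ => LChart.StepLE.mono (le_max_right α β)) _ _ hvu)
  · rintro ⟨w, huw, hvw⟩
    exact (LChart.sameSCC_of_reflTransGen_loopsBack huw).trans
      (LChart.sameSCC_of_reflTransGen_loopsBack hvw).symm

/-- Two vertices `u` and `v` are in the same strongly connected component if and
only if there exists a vertex `w` such that `u ⇢* w` and `v ⇢* w`. -/
theorem sameSCC_iff_common_loopsBack {V A : Type} [Finite V] (C : LChart V A)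
    (h : C.IsLLEE) (u v : V) :
    C.SameSCC u v ↔ ∃ w : V, Relation.ReflTransGen C.LoopsBack u w ∧
      Relation.ReflTransGen C.LoopsBack v w :=
  sameSCC_iff_common_loopsBack_general C h u v
end

section
/- Every star expression e (over 0, letters, +, ·, and binary star, without 1) is provably equal in BBP to the sum (Σ_{i=1}^m a_i) + (Σ_{j=1}^n b_j · e_j'), where {(a_1,√),...,(a_m,√),(b_1,e_1'),...,(b_n,e_n')} is an enumeration of the set of action derivatives of e, i.e., of all pairs (a,ξ) with e →a ξ derivable in the transition system (the 'fundamental theorem' of differential calculus for star expressions). -/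
/-- Star expressions over an alphabet `A` (without the constant 1, with binary Kleene star). -/
inductive StarExp (A : Type) : Type
  | zero : StarExp A
  | act : A → StarExp A
  | sum : StarExp A → StarExp A → StarExp A
  | prod : StarExp A → StarExp A → StarExp A
  | star : StarExp A → StarExp A → StarExp A

namespace StarExp

/-- The star height of a star expression. -/
def height {A : Type} : StarExp A → ℕ
  | zero => 0
  | act _ => 0
  | sum e1 e2 => max e1.height e2.height
  | prod e1 e2 => max e1.height e2.height
  | star e1 e2 => max (e1.height + 1) e2.height

end StarExp
/-- The transition system of the process semantics: `Step e a ξ` means `e —a→ ξ`,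
where `ξ` is either a star expression (`some e'`) or the termination symbol √ (`none`). -/
inductive Step {A : Type} : StarExp A → A → Option (StarExp A) → Prop
  | act (a : A) : Step (.act a) a none
  | sum_left {e1 : StarExp A} {a : A} {ξ : Option (StarExp A)} (e2 : StarExp A) :
      Step e1 a ξ → Step (.sum e1 e2) a ξ
  | sum_right {e2 : StarExp A} {a : A} {ξ : Option (StarExp A)} (e1 : StarExp A) :
      Step e2 a ξ → Step (.sum e1 e2) a ξ
  | prod_left {e1 e1' : StarExp A} {a : A} (e2 : StarExp A) :
      Step e1 a (some e1') → Step (.prod e1 e2) a (some (.prod e1' e2))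
  | prod_tick {e1 : StarExp A} {a : A} (e2 : StarExp A) :
      Step e1 a none → Step (.prod e1 e2) a (some e2)
  | star_left {e1 e1' : StarExp A} {a : A} (e2 : StarExp A) :
      Step e1 a (some e1') → Step (.star e1 e2) a (some (.prod e1' (.star e1 e2)))
  | star_tick {e1 : StarExp A} {a : A} (e2 : StarExp A) :
      Step e1 a none → Step (.star e1 e2) a (some (.star e1 e2))
  | star_right {e2 : StarExp A} {a : A} {ξ : Option (StarExp A)} (e1 : StarExp A) :
      Step e2 a ξ → Step (.star e1 e2) a ξ

/-- Provable equality in the proof system BBP: equational logic together with the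
axioms (B1)–(B7), (BKS1), (BKS2) and the fixed-point rule RSP*. -/
inductive BBP {A : Type} : StarExp A → StarExp A → Prop
  | refl (e : StarExp A) : BBP e e
  | symm {e f : StarExp A} : BBP e f → BBP f e
  | trans {e f g : StarExp A} : BBP e f → BBP f g → BBP e g
  | sum_congr {e1 e2 f1 f2 : StarExp A} :
      BBP e1 f1 → BBP e2 f2 → BBP (.sum e1 e2) (.sum f1 f2)
  | prod_congr {e1 e2 f1 f2 : StarExp A} :
      BBP e1 f1 → BBP e2 f2 → BBP (.prod e1 e2) (.prod f1 f2)
  | star_congr {e1 e2 f1 f2 : StarExp A} :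
      BBP e1 f1 → BBP e2 f2 → BBP (.star e1 e2) (.star f1 f2)
  | B1 (x y : StarExp A) : BBP (.sum x y) (.sum y x)
  | B2 (x y z : StarExp A) : BBP (.sum (.sum x y) z) (.sum x (.sum y z))
  | B3 (x : StarExp A) : BBP (.sum x x) x
  | B4 (x y z : StarExp A) : BBP (.prod (.sum x y) z) (.sum (.prod x z) (.prod y z))
  | B5 (x y z : StarExp A) : BBP (.prod (.prod x y) z) (.prod x (.prod y z))
  | B6 (x : StarExp A) : BBP (.sum x .zero) x
  | B7 (x : StarExp A) : BBP (.prod .zero x) .zero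
  | BKS1 (x y : StarExp A) : BBP (.sum (.prod x (.star x y)) y) (.star x y)
  | BKS2 (x y z : StarExp A) : BBP (.prod (.star x y) z) (.star x (.prod y z))
  | RSP {x y z : StarExp A} : BBP x (.sum (.prod y x) z) → BBP x (.star y z)

/-- The sum `Σ_{i=1}^k e_i` of a list of star expressions: `0` for the empty list,
`e` for a singleton, and otherwise nested to the left. -/
def sumList {A : Type} : List (StarExp A) → StarExp A
  | [] => StarExp.zero
  | e :: es => es.foldl StarExp.sum e

/-!
Structural induction on `e`, comparing `e` with the sum over one canonical enumeration of its
derivatives, read off the transition rules. The sum and product cases are right distributivity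
(B4, B5, B7) together with associativity and commutativity of `+`; in the star case BKS1 unfolds
`e₁ * e₂` once into `e₁ · (e₁ * e₂) + e₂`, which reduces it to the product case. Any two
enumerations of the same set of derivatives have provably equal sums, by idempotence of `+` (B3).
-/

open StarExp

variable {A : Type}

instance : Trans (@BBP A) (@BBP A) (@BBP A) := ⟨BBP.trans⟩

namespace BBP

theorem zero_sum (x : StarExp A) : BBP (sum zero x) x :=
  (B1 _ _).trans (B6 _)

theorem sum_sum_sum_comm (w x y z : StarExp A) :
    BBP (sum (sum w x) (sum y z)) (sum (sum w y) (sum x z)) :=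
  calc BBP _ (sum w (sum (sum x y) z)) := (B2 _ _ _).trans (sum_congr (refl w) (B2 _ _ _).symm)
    BBP _ (sum w (sum (sum y x) z)) := sum_congr (refl w) (sum_congr (B1 x y) (refl z))
    BBP _ (sum (sum w y) (sum x z)) := (sum_congr (refl w) (B2 _ _ _)).trans (B2 _ _ _).symm

theorem foldl_sum_congr {s t : StarExp A} (h : BBP s t) (l : List (StarExp A)) :
    BBP (l.foldl sum s) (l.foldl sum t) := by
  induction l generalizing s t with
  | nil => exact h
  | cons c l ih => exact ih (sum_congr h (refl c))

theorem foldl_sum_sum (x y : StarExp A) (l : List (StarExp A)) :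
    BBP (l.foldl sum (sum x y)) (sum x (l.foldl sum y)) := by
  induction l generalizing y with
  | nil => exact refl _
  | cons z l ih => exact (foldl_sum_congr (B2 x y z) l).trans (ih (sum y z))

theorem sumList_cons (x : StarExp A) (xs : List (StarExp A)) :
    BBP (sumList (x :: xs)) (sum x (sumList xs)) := by
  cases xs with
  | nil => exact (B6 x).symm
  | cons y ys => exact foldl_sum_sum x y ys

theorem sumList_append (xs ys : List (StarExp A)) :
    BBP (sumList (xs ++ ys)) (sum (sumList xs) (sumList ys)) := by
  induction xs with
  | nil => exact (zero_sum _).symm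
  | cons x xs ih =>
    calc BBP _ (sum x (sum (sumList xs) (sumList ys))) :=
          (sumList_cons _ _).trans (sum_congr (refl x) ih)
      BBP _ (sum (sumList (x :: xs)) (sumList ys)) :=
          (B2 _ _ _).symm.trans (sum_congr (sumList_cons _ _).symm (refl _))

theorem sumList_map_congr {α : Type} {f g : α → StarExp A} (h : ∀ x, BBP (f x) (g x))
    (l : List α) : BBP (sumList (l.map f)) (sumList (l.map g)) := by
  induction l with
  | nil => exact refl _
  | cons x l ih =>
    exact (sumList_cons _ _).trans ((sum_congr (h x) ih).trans (sumList_cons _ _).symm)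

theorem sumList_prod (xs : List (StarExp A)) (z : StarExp A) :
    BBP (prod (sumList xs) z) (sumList (xs.map (prod · z))) := by
  induction xs with
  | nil => exact B7 z
  | cons x xs ih =>
    calc BBP _ (sum (prod x z) (prod (sumList xs) z)) :=
          (prod_congr (sumList_cons _ _) (refl z)).trans (B4 _ _ _)
      BBP _ (sumList ((x :: xs).map (prod · z))) :=
          (sum_congr (refl _) ih).trans (sumList_cons _ _).symm

theorem sum_sumList_of_mem {x : StarExp A} {ys : List (StarExp A)} (h : x ∈ ys) :
    BBP (sum x (sumList ys)) (sumList ys) := by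
  induction ys with
  | nil => cases h
  | cons y ys ih =>
    have hx : BBP (sum x (sum y (sumList ys))) (sum y (sumList ys)) := by
      rcases List.mem_cons.1 h with rfl | h
      · exact (B2 _ _ _).symm.trans (sum_congr (B3 x) (refl _))
      · calc BBP _ (sum y (sum x (sumList ys))) :=
              (B2 _ _ _).symm.trans ((sum_congr (B1 x y) (refl _)).trans (B2 _ _ _))
          BBP _ (sum y (sumList ys)) := sum_congr (refl y) (ih h)
    exact (sum_congr (refl x) (sumList_cons y ys)).trans (hx.trans (sumList_cons y ys).symm)

theorem sum_sumList_of_subset {xs ys : List (StarExp A)} (h : xs ⊆ ys) :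
    BBP (sum (sumList xs) (sumList ys)) (sumList ys) := by
  induction xs with
  | nil => exact zero_sum _
  | cons x xs ih =>
    calc BBP _ (sum x (sum (sumList xs) (sumList ys))) :=
          (sum_congr (sumList_cons x xs) (refl _)).trans (B2 _ _ _)
      BBP _ (sumList ys) :=
          (sum_congr (refl x) (ih (List.cons_subset.1 h).2)).trans
            (sum_sumList_of_mem (List.cons_subset.1 h).1)

theorem sumList_congr {xs ys : List (StarExp A)} (h : ∀ x, x ∈ xs ↔ x ∈ ys) :
    BBP (sumList xs) (sumList ys) :=
  calc BBP _ (sum (sumList ys) (sumList xs)) := (sum_sumList_of_subset fun x => (h x).2).symm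
    BBP _ (sum (sumList xs) (sumList ys)) := B1 _ _
    BBP _ (sumList ys) := sum_sumList_of_subset fun x => (h x).1

end BBP

section Step

variable {e₁ e₂ : StarExp A} {a : A} {ξ : Option (StarExp A)}

theorem not_step_zero : ¬ Step (zero : StarExp A) a ξ := nofun

theorem step_act_iff {b : A} : Step (act b) a ξ ↔ a = b ∧ ξ = none := by
  constructor
  · rintro ⟨⟩
    exact ⟨rfl, rfl⟩
  · rintro ⟨rfl, rfl⟩
    exact .act a

theorem step_sum_iff : Step (sum e₁ e₂) a ξ ↔ Step e₁ a ξ ∨ Step e₂ a ξ := by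
  constructor
  · intro h
    cases h with
    | sum_left _ h => exact .inl h
    | sum_right _ h => exact .inr h
  · rintro (h | h)
    exacts [.sum_left _ h, .sum_right _ h]

theorem step_prod_iff :
    Step (prod e₁ e₂) a ξ ↔
      (Step e₁ a none ∧ ξ = some e₂) ∨
        ∃ e₁', Step e₁ a (some e₁') ∧ ξ = some (prod e₁' e₂) := by
  constructor
  · intro h
    cases h with
    | prod_tick _ h => exact .inl ⟨h, rfl⟩
    | prod_left _ h => exact .inr ⟨_, h, rfl⟩
  · rintro (⟨h, rfl⟩ | ⟨_, h, rfl⟩)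
    exacts [.prod_tick _ h, .prod_left _ h]

theorem step_star_iff :
    Step (star e₁ e₂) a ξ ↔
      (Step e₁ a none ∧ ξ = some (star e₁ e₂)) ∨
        (∃ e₁', Step e₁ a (some e₁') ∧ ξ = some (prod e₁' (star e₁ e₂))) ∨ Step e₂ a ξ := by
  constructor
  · intro h
    cases h with
    | star_tick _ h => exact .inl ⟨h, rfl⟩
    | star_left _ h => exact .inr (.inl ⟨_, h, rfl⟩)
    | star_right _ h => exact .inr (.inr h)
  · rintro (⟨h, rfl⟩ | ⟨_, h, rfl⟩ | h)
    exacts [.star_tick _ h, .star_left _ h, .star_right _ h]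

end Step

namespace StarExp

def tickList : StarExp A → List A
  | zero => []
  | act a => [a]
  | sum e₁ e₂ => tickList e₁ ++ tickList e₂
  | prod _ _ => []
  | star _ e₂ => tickList e₂

def derivList : StarExp A → List (A × StarExp A)
  | zero => []
  | act _ => []
  | sum e₁ e₂ => derivList e₁ ++ derivList e₂
  | prod e₁ e₂ =>
      (tickList e₁).map (·, e₂) ++ (derivList e₁).map fun p => (p.1, prod p.2 e₂)
  | star e₁ e₂ =>
      (tickList e₁).map (·, star e₁ e₂) ++
        (derivList e₁).map (fun p => (p.1, prod p.2 (star e₁ e₂))) ++ derivList e₂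

theorem mem_tickList {e : StarExp A} {a : A} : a ∈ tickList e ↔ Step e a none := by
  induction e with
  | zero => simp [tickList, not_step_zero]
  | act b => simp [tickList, step_act_iff]
  | sum e₁ e₂ ih₁ ih₂ => simp [tickList, step_sum_iff, ih₁, ih₂]
  | prod e₁ e₂ => simp [tickList, step_prod_iff]
  | star e₁ e₂ _ ih₂ => simp [tickList, step_star_iff, ih₂]

theorem mem_derivList {e f : StarExp A} {a : A} : (a, f) ∈ derivList e ↔ Step e a (some f) := by
  induction e generalizing f with
  | zero => simp [derivList, not_step_zero]
  | act b => simp [derivList, step_act_iff]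
  | sum e₁ e₂ ih₁ ih₂ => simp [derivList, step_sum_iff, ih₁, ih₂]
  | prod e₁ e₂ ih₁ => simp [derivList, step_prod_iff, mem_tickList, ih₁, eq_comm]
  | star e₁ e₂ ih₁ ih₂ => simp [derivList, step_star_iff, mem_tickList, ih₁, ih₂, eq_comm]

/-- The sum `(Σ aᵢ) + (Σ bⱼ · e'ⱼ)` over the enumeration `as`, `bs` of derivatives. -/
def expansion (as : List A) (bs : List (A × StarExp A)) : StarExp A :=
  sum (sumList (as.map act)) (sumList (bs.map fun p => prod (act p.1) p.2))

theorem expansion_append (as as' : List A) (bs bs' : List (A × StarExp A)) :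
    BBP (expansion (as ++ as') (bs ++ bs')) (sum (expansion as bs) (expansion as' bs')) := by
  unfold expansion
  rw [List.map_append, List.map_append]
  exact (BBP.sum_congr (BBP.sumList_append _ _) (BBP.sumList_append _ _)).trans
    (BBP.sum_sum_sum_comm _ _ _ _)

theorem expansion_prod (as : List A) (bs : List (A × StarExp A)) (z : StarExp A) :
    BBP (prod (expansion as bs) z)
      (expansion [] (as.map (·, z) ++ bs.map fun p => (p.1, prod p.2 z))) := by
  have hticks : BBP (prod (sumList (as.map act)) z)
      (sumList (as.map fun a => prod (act a) z)) := by
    simpa only [List.map_map, Function.comp_def] using BBP.sumList_prod (as.map act) z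
  have hderivs : BBP (prod (sumList (bs.map fun p => prod (act p.1) p.2)) z)
      (sumList (bs.map fun p => prod (act p.1) (prod p.2 z))) := by
    refine (BBP.sumList_prod _ z).trans ?_
    rw [List.map_map]
    exact BBP.sumList_map_congr (fun p => BBP.B5 _ _ _) bs
  calc BBP _ (sum (prod (sumList (as.map act)) z)
          (prod (sumList (bs.map fun p => prod (act p.1) p.2)) z)) := BBP.B4 _ _ _
    BBP _ (sumList ((as.map fun a => prod (act a) z) ++
          bs.map fun p => prod (act p.1) (prod p.2 z))) :=
        (BBP.sum_congr hticks hderivs).trans (BBP.sumList_append _ _).symm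
    BBP _ (expansion [] (as.map (·, z) ++ bs.map fun p => (p.1, prod p.2 z))) := by
      simpa [expansion, sumList.eq_1, Function.comp_def] using (BBP.zero_sum _).symm

theorem expansion_congr {as as' : List A} {bs bs' : List (A × StarExp A)}
    (has : ∀ a, a ∈ as ↔ a ∈ as') (hbs : ∀ p, p ∈ bs ↔ p ∈ bs') :
    BBP (expansion as bs) (expansion as' bs') :=
  BBP.sum_congr (BBP.sumList_congr fun x => by simp only [List.mem_map, has])
    (BBP.sumList_congr fun x => by simp only [List.mem_map, hbs])

theorem bbp_expansion (e : StarExp A) : BBP e (expansion (tickList e) (derivList e)) := by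
  induction e with
  | zero => exact (BBP.B6 _).symm
  | act a => exact (BBP.B6 _).symm
  | sum e₁ e₂ ih₁ ih₂ => exact (BBP.sum_congr ih₁ ih₂).trans (expansion_append _ _ _ _).symm
  | prod e₁ e₂ ih₁ => exact (BBP.prod_congr ih₁ (BBP.refl e₂)).trans (expansion_prod _ _ _)
  | star e₁ e₂ ih₁ ih₂ =>
    calc BBP _ (sum (prod e₁ (star e₁ e₂)) e₂) := (BBP.BKS1 e₁ e₂).symm
      BBP _ (sum (expansion [] _) (expansion (tickList e₂) (derivList e₂))) :=
          BBP.sum_congr ((BBP.prod_congr ih₁ (BBP.refl _)).trans (expansion_prod _ _ _)) ih₂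
      BBP _ _ := (expansion_append [] _ _ _).symm

end StarExp

/-- The fundamental theorem of differential calculus for star expressions: the set
of action derivatives of any star expression `e` can be enumerated by finite lists
`as` (the pairs `(a,√)`) and `bs` (the pairs `(b,e')`), and for any such
enumeration `e` is provably equal in BBP to `(Σ_{i=1}^m a_i) + (Σ_{j=1}^n b_j · e_j')`. -/
theorem fundamental_theorem {A : Type} (e : StarExp A) :
    (∃ (as : List A) (bs : List (A × StarExp A)),
        (∀ a : A, a ∈ as ↔ Step e a none) ∧
        (∀ p : A × StarExp A, p ∈ bs ↔ Step e p.1 (some p.2))) ∧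
    (∀ (as : List A) (bs : List (A × StarExp A)),
        (∀ a : A, a ∈ as ↔ Step e a none) →
        (∀ p : A × StarExp A, p ∈ bs ↔ Step e p.1 (some p.2)) →
        BBP e (StarExp.sum (sumList (as.map StarExp.act))
          (sumList (bs.map fun p => StarExp.prod (StarExp.act p.1) p.2)))) := by
  refine ⟨⟨tickList e, derivList e, fun _ => mem_tickList, fun _ => mem_derivList⟩, ?_⟩
  intro as bs has hbs
  exact (bbp_expansion e).trans <|
    expansion_congr (fun a => by rw [has, mem_tickList]) (fun p => by rw [hbs, mem_derivList])
end
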